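/- If Y is a triangular array with I(Y,k) < ∞ and J(Y,k) = ∞, and Y' = Lower(Y, 1, I(Y,k)), then K_1(Y', n) = I(Y,k); consequently a(Y',1,n) = (Y, 0, I(Y,k)). -/

import Mathlib

open scoped BigOperators Classical

noncomputable section

/-- A triangular array of size `n`: entries `y i j` for `1 ≤ i ≤ n`, `1 ≤ j ≤ n - i + 1`
(zero outside this range), weakly decreasing along ladders: `y (i-1) (j+1) ≤ y i j`. -/
def IsTri (n : ℕ) (y : ℕ → ℕ → ℕ) : Prop :=
  (∀ i j, ¬(1 ≤ i ∧ i ≤ n ∧ 1 ≤ j ∧ j ≤ n - i + 1) → y i j = 0) ∧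
  (∀ i j, 2 ≤ i → i ≤ n → 1 ≤ j → j ≤ n - i + 1 → y (i - 1) (j + 1) ≤ y i j)

/-- The dimension vector of a triangular array: the `i`-th chute sum. -/
def udim (n : ℕ) (y : ℕ → ℕ → ℕ) (i : ℕ) : ℕ := ∑ j ∈ Finset.Icc 1 (n - i + 1), y i j

/-- The set `P(w)` of triangular arrays of size `n` with dimension vector `w`. -/
def InP (n : ℕ) (w : ℕ → ℕ) (y : ℕ → ℕ → ℕ) : Prop :=
  IsTri n y ∧ ∀ i, 1 ≤ i → i ≤ n → udim n y i = w i

/-- The set `B(w)`: families `(b i j)` for `1 ≤ i ≤ j ≤ n` (zero outside) with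
`∑ b i j • γ_{ij} = w`, i.e. for each `1 ≤ k ≤ n`, `∑_{i ≤ k ≤ j} b i j = w k`. -/
def InB (n : ℕ) (w : ℕ → ℕ) (b : ℕ → ℕ → ℕ) : Prop :=
  (∀ i j, ¬(1 ≤ i ∧ i ≤ j ∧ j ≤ n) → b i j = 0) ∧
  ∀ k, 1 ≤ k → k ≤ n → (∑ i ∈ Finset.Icc 1 k, ∑ j ∈ Finset.Icc k n, b i j) = w k

/-- The map `ν : P(w) → B(w)`. -/
def nuMap (n : ℕ) (y : ℕ → ℕ → ℕ) : ℕ → ℕ → ℕ := fun i j =>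
  if 1 ≤ i ∧ i ≤ j ∧ j ≤ n then y i (j - i + 1) - y (i - 1) (j - i + 2) else 0

/-- The map `ν̄ : B(w) → P(w)`. -/
def nubarMap (n : ℕ) (b : ℕ → ℕ → ℕ) : ℕ → ℕ → ℕ := fun i j =>
  if 1 ≤ i ∧ i ≤ n ∧ 1 ≤ j ∧ j ≤ n - i + 1 then ∑ h ∈ Finset.Icc 1 i, b h (i + j - 1) else 0

/-- `Raise Y i j` increments the entry in chute `i`, column `j`. -/
def Raise (y : ℕ → ℕ → ℕ) (i j : ℕ) : ℕ → ℕ → ℕ := fun p q =>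
  if p = i ∧ q = j then y p q + 1 else y p q

/-- `Lower Y i j` decrements the entry in chute `i`, column `j`. -/
def Lower (y : ℕ → ℕ → ℕ) (i j : ℕ) : ℕ → ℕ → ℕ := fun p q =>
  if p = i ∧ q = j then y p q - 1 else y p q

/-- `K_i(Y,k) = max({1} ∪ {j : 2 ≤ j ≤ k, y i j < y (i+1) (j-1)})`. -/
def Kval (y : ℕ → ℕ → ℕ) (i k : ℕ) : ℕ :=
  ((Finset.Icc 2 k).filter (fun j => y i j < y (i + 1) (j - 1))).sup id ⊔ 1

/-- Procedure `a`: `a(Y,i,k) = (Raise(Y,i,K_i(Y,k)), i-1, K_i(Y,k))`. -/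
def aStep (t : (ℕ → ℕ → ℕ) × ℕ × ℕ) : (ℕ → ℕ → ℕ) × ℕ × ℕ :=
  (Raise t.1 t.2.1 (Kval t.1 t.2.1 t.2.2), t.2.1 - 1, Kval t.1 t.2.1 t.2.2)

/-- Procedure `A_i`: apply `a` exactly `i` times starting from `(Y, i, n - i + 1)`. -/
def Aproc (n i : ℕ) (y : ℕ → ℕ → ℕ) : ℕ → ℕ → ℕ := (aStep^[i] (y, i, n - i + 1)).1

/-- `Del↘(Y)` : delete the first chute. -/
def delChute (y : ℕ → ℕ → ℕ) : ℕ → ℕ → ℕ := fun i j =>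
  if 1 ≤ i ∧ 1 ≤ j then y (i + 1) j else 0

/-- `Y ∪↘ Q` : adjoin `Q` as the new topmost chute. -/
def adjChute (y : ℕ → ℕ → ℕ) (q : ℕ → ℕ) : ℕ → ℕ → ℕ := fun i j =>
  if i = 0 then 0 else if i = 1 then q j else y (i - 1) j

/-- The set whose infimum is `I(Y,k)`; `I(Y,k) < ∞` iff this set is nonempty. -/
def Iset (n : ℕ) (y : ℕ → ℕ → ℕ) (k : ℕ) : Set ℕ := {j | k ≤ j ∧ j ≤ n ∧ 0 < y 1 j}

/-- `I(Y,k)`: the smallest `j ≥ k` with `y 1 j > 0`. -/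
def Idef (n : ℕ) (y : ℕ → ℕ → ℕ) (k : ℕ) : ℕ := sInf (Iset n y k)

/-- The set whose infimum is `J(Y,k)`; `J(Y,k) < ∞` iff this set is nonempty. -/
def Jset (n : ℕ) (y : ℕ → ℕ → ℕ) (k : ℕ) : Set ℕ :=
  {j | Idef n y k < j ∧ j ≤ n ∧ y 1 j < y 2 (j - 1)}

/-- `J(Y,k)`: the smallest `j > I(Y,k)` with `y 1 j < y 2 (j-1)`. -/
def Jdef (n : ℕ) (y : ℕ → ℕ → ℕ) (k : ℕ) : ℕ := sInf (Jset n y k)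

/-- Procedure `B`, by induction on the size `n`. -/
def Bproc : ℕ → (ℕ → ℕ → ℕ) → ℕ → ((ℕ → ℕ → ℕ) × ℕ)
  | 0, y, _ => (y, 1)
  | n + 1, y, k =>
    if (Jset (n + 1) y k).Nonempty then
      let zr := Bproc n (delChute y) (Jdef (n + 1) y k - 1)
      (Lower (adjChute zr.1 (y 1)) 1 (Idef (n + 1) y k), zr.2 + 1)
    else (Lower y 1 (Idef (n + 1) y k), 1)

/-- Apply `A_m^{y_{N+1-m,m} - y_{N-m,m+1}}` for `m = 1, …, M` (innermost `A_1`). -/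
def applyAs (N : ℕ) (y : ℕ → ℕ → ℕ) : ℕ → (ℕ → ℕ → ℕ) → (ℕ → ℕ → ℕ)
  | 0, z => z
  | m + 1, z => (Aproc N (m + 1))^[y (N - m) (m + 1) - y (N - m - 1) (m + 2)] (applyAs N y m z)

/-- `Del↗(Y)` : delete the last ladder (of an array of size `n`). -/
def delLadder (n : ℕ) (y : ℕ → ℕ → ℕ) : ℕ → ℕ → ℕ := fun i j =>
  if 1 ≤ i ∧ 1 ≤ j ∧ i + j ≤ n then y i j else 0

/-- The combinatorial Fourier transform `T`. -/
def Tmap : ℕ → (ℕ → ℕ → ℕ) → (ℕ → ℕ → ℕ)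
  | 0, y => y
  | 1, y => y
  | n + 2, y =>
      applyAs (n + 2) y (n + 2) (adjChute (Tmap (n + 1) (delLadder (n + 2) y)) (fun _ => 0))

/-- Iterate procedure `B` (with `k = 1`), recording the list of produced integers `q`. -/
def Biter (n : ℕ) (y : ℕ → ℕ → ℕ) : ℕ → ((ℕ → ℕ → ℕ) × List ℕ)
  | 0 => (y, [])
  | m + 1 =>
    let p := Biter n y m
    let b := Bproc n p.1 1
    (b.1, p.2 ++ [b.2])

/-- `Y ∪↗ P` : adjoin `P` as the new bottommost ladder (result of size `N`). -/
def adjLadder (N : ℕ) (z : ℕ → ℕ → ℕ) (p : ℕ → ℕ) : ℕ → ℕ → ℕ := fun i j =>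
  if 1 ≤ i ∧ 1 ≤ j ∧ i + j = N + 1 then p j else z i j

/-- The inverse combinatorial Fourier transform `T'`. -/
def Tinv : ℕ → (ℕ → ℕ → ℕ) → (ℕ → ℕ → ℕ)
  | 0, y => y
  | 1, y => y
  | n + 2, y =>
    let r := Biter (n + 2) y (udim (n + 2) y 1)
    adjLadder (n + 2) (Tinv (n + 1) (delChute r.1)) (fun j => r.2.countP (fun q => decide (j ≤ q)))

/-- The composition `x_{i+j-1} ∘ ⋯ ∘ x_{i+1} ∘ x_i` (`j` maps, starting at vertex `i`). -/
def chainMap (w : ℕ → ℕ) (x : ∀ m : ℕ, (Fin (w m) → ℂ) →ₗ[ℂ] (Fin (w (m + 1)) → ℂ)) (i : ℕ) :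
    ∀ j : ℕ, (Fin (w i) → ℂ) →ₗ[ℂ] (Fin (w (i + j)) → ℂ)
  | 0 => LinearMap.id
  | j + 1 => (x (i + j)).comp (chainMap w x i j)

/-- `u` is a Jordan basis of type `Y` for the representation `x`. -/
def IsJordanBasis (n : ℕ) (w : ℕ → ℕ) (y : ℕ → ℕ → ℕ)
    (x : ∀ m : ℕ, (Fin (w m) → ℂ) →ₗ[ℂ] (Fin (w (m + 1)) → ℂ))
    (u : ∀ m : ℕ, ℕ → ℕ → (Fin (w m) → ℂ)) : Prop :=
  (∀ i, 1 ≤ i → i ≤ n →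
    (LinearIndependent ℂ
      (fun p : {p : ℕ × ℕ // 1 ≤ p.1 ∧ p.1 ≤ n - i + 1 ∧ 1 ≤ p.2 ∧ p.2 ≤ y i p.1} =>
        u i p.1.1 p.1.2) ∧
    Submodule.span ℂ
      (Set.range (fun p : {p : ℕ × ℕ // 1 ≤ p.1 ∧ p.1 ≤ n - i + 1 ∧ 1 ≤ p.2 ∧ p.2 ≤ y i p.1} =>
        u i p.1.1 p.1.2)) = ⊤)) ∧
  (∀ i j k, 1 ≤ i → i + 1 ≤ n → 1 ≤ j → j ≤ n - i + 1 → 1 ≤ k → k ≤ y i j →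
    x i (u i j k) = if 2 ≤ j then u (i + 1) (j - 1) k else 0)

/-- `V` is a kernel flag of type `Y` (with the convention `V i 0 = ⊥`). -/
def IsKerFlag (n : ℕ) (w : ℕ → ℕ) (y : ℕ → ℕ → ℕ)
    (V : ∀ i : ℕ, ℕ → Submodule ℂ (Fin (w i) → ℂ)) : Prop :=
  ∀ i, 1 ≤ i → i ≤ n →
    V i 0 = ⊥ ∧
    (∀ j, j ≤ n - i → V i j ≤ V i (j + 1)) ∧
    V i (n - i + 1) = ⊤ ∧
    (∀ j, 1 ≤ j → j ≤ n - i + 1 → Module.finrank ℂ (V i j) = ∑ h ∈ Finset.Icc 1 j, y i h)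

/-- The representation `x` preserves the kernel flag `V`. -/
def PreservesFlag (n : ℕ) (w : ℕ → ℕ)
    (x : ∀ m : ℕ, (Fin (w m) → ℂ) →ₗ[ℂ] (Fin (w (m + 1)) → ℂ))
    (V : ∀ i : ℕ, ℕ → Submodule ℂ (Fin (w i) → ℂ)) : Prop :=
  ∀ i, 1 ≤ i → i + 1 ≤ n → ∀ j, 1 ≤ j → j ≤ n - i + 1 → ∀ v ∈ V i j,
    (j = 1 → x i v = 0) ∧ (2 ≤ j → x i v ∈ V (i + 1) (j - 1))

/-- The flag of kernels `V i j = ker (x_{i+j-1} ∘ ⋯ ∘ x_i)`. -/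
def kerFlag (w : ℕ → ℕ) (x : ∀ m : ℕ, (Fin (w m) → ℂ) →ₗ[ℂ] (Fin (w (m + 1)) → ℂ)) :
    ∀ i : ℕ, ℕ → Submodule ℂ (Fin (w i) → ℂ) := fun i j => LinearMap.ker (chainMap w x i j)

/-- The Lie-algebra stabilizer of the flag `V` inside `𝔤(w) = ∏ End(ℂ^{w_i})`. -/
def stabFlagSub (n : ℕ) (w : ℕ → ℕ) (V : ∀ i : ℕ, ℕ → Submodule ℂ (Fin (w i) → ℂ)) :
    Submodule ℂ (∀ i : Fin n, (Fin (w (i.val + 1)) → ℂ) →ₗ[ℂ] (Fin (w (i.val + 1)) → ℂ)) where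
  carrier := {g | ∀ (i : Fin n) (j : ℕ), 1 ≤ j → j ≤ n - (i.val + 1) + 1 →
    ∀ v ∈ V (i.val + 1) j, g i v ∈ V (i.val + 1) j}
  add_mem' := by
    intro a b ha hb i j h1 h2 v hv
    simpa using (V (i.val + 1) j).add_mem (ha i j h1 h2 v hv) (hb i j h1 h2 v hv)
  zero_mem' := by
    intro i j h1 h2 v hv
    simpa using (V (i.val + 1) j).zero_mem
  smul_mem' := by
    intro c a ha i j h1 h2 v hv
    simpa using (V (i.val + 1) j).smul_mem c (ha i j h1 h2 v hv)

/-- The linear space `E(w)^V` of representations preserving the kernel flag `V`. -/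
def presFlagSub (n : ℕ) (w : ℕ → ℕ) (V : ∀ i : ℕ, ℕ → Submodule ℂ (Fin (w i) → ℂ)) :
    Submodule ℂ (∀ i : Fin (n - 1), (Fin (w (i.val + 1)) → ℂ) →ₗ[ℂ] (Fin (w (i.val + 2)) → ℂ)) where
  carrier := {x | ∀ (i : Fin (n - 1)) (j : ℕ), 1 ≤ j → j ≤ n - (i.val + 1) + 1 →
    ∀ v ∈ V (i.val + 1) j,
      (j = 1 → x i v = 0) ∧ (2 ≤ j → x i v ∈ V (i.val + 2) (j - 1))}
  add_mem' := by
    intro a b ha hb i j h1 h2 v hv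
    obtain ⟨ha1, ha2⟩ := ha i j h1 h2 v hv
    obtain ⟨hb1, hb2⟩ := hb i j h1 h2 v hv
    constructor
    · intro hj
      simp [ha1 hj, hb1 hj]
    · intro hj
      simpa using (V (i.val + 2) (j - 1)).add_mem (ha2 hj) (hb2 hj)
  zero_mem' := by
    intro i j h1 h2 v hv
    constructor
    · intro _; simp
    · intro _
      simpa using (V (i.val + 2) (j - 1)).zero_mem
  smul_mem' := by
    intro c a ha i j h1 h2 v hv
    obtain ⟨ha1, ha2⟩ := ha i j h1 h2 v hv
    constructor
    · intro hj
      simp [ha1 hj]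
    · intro hj
      simpa using (V (i.val + 2) (j - 1)).smul_mem c (ha2 hj)

end

section LowerRaise

variable (y : ℕ → ℕ → ℕ) {i j p q : ℕ}

theorem Lower_apply_self : Lower y i j i j = y i j - 1 := by
  simp [Lower]

theorem Lower_apply_of_ne_left (hp : p ≠ i) : Lower y i j p q = y p q := by
  simp [Lower, hp]

theorem Lower_apply_of_ne_right (hq : q ≠ j) : Lower y i j p q = y p q := by
  simp [Lower, hq]

variable {y}

theorem Raise_Lower_of_pos (h : 0 < y i j) : Raise (Lower y i j) i j = y := by
  funext p q
  by_cases hpq : p = i ∧ q = j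
  · obtain ⟨rfl, rfl⟩ := hpq
    simp only [Raise, Lower, and_self, if_true]
    omega
  · simp [Raise, Lower, hpq]

end LowerRaise

section Kval

variable {y : ℕ → ℕ → ℕ} {i k : ℕ}

theorem one_le_Kval : 1 ≤ Kval y i k := le_sup_right

theorem le_Kval {j : ℕ} (h2j : 2 ≤ j) (hjk : j ≤ k) (hj : y i j < y (i + 1) (j - 1)) :
    j ≤ Kval y i k :=
  le_sup_of_le_left <| Finset.le_sup (f := id) <| by simp [h2j, hjk, hj]

theorem Kval_le {m : ℕ} (hm : 1 ≤ m)
    (hmax : ∀ j, m < j → j ≤ k → ¬y i j < y (i + 1) (j - 1)) : Kval y i k ≤ m := by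
  refine sup_le (Finset.sup_le fun j hj ↦ ?_) hm
  simp only [Finset.mem_filter, Finset.mem_Icc] at hj
  by_contra! hmj
  exact hmax j hmj hj.1.2 hj.2

end Kval

theorem IsTri.apply_one_le_apply_two {n : ℕ} {y : ℕ → ℕ → ℕ} (hy : IsTri n y) {j : ℕ}
    (h2j : 2 ≤ j) (hjn : j ≤ n) : y 1 j ≤ y 2 (j - 1) := by
  simpa [Nat.sub_add_cancel (by omega : 1 ≤ j)] using
    hy.2 2 (j - 1) le_rfl (by omega) (by omega) (by omega)

/-- For `2 ≤ m`, lowering `y 1 m` creates a descent at `m` because of the ladder inequality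
`y 1 m ≤ y 2 (m - 1)`. -/
theorem Kval_Lower_one {n : ℕ} {y : ℕ → ℕ → ℕ} (hy : IsTri n y) {m : ℕ} (h1m : 1 ≤ m)
    (hmn : m ≤ n) (hpos : 0 < y 1 m)
    (hmax : ∀ j, m < j → j ≤ n → ¬y 1 j < y 2 (j - 1)) :
    Kval (Lower y 1 m) 1 n = m := by
  refine le_antisymm (Kval_le h1m fun j hmj hjn ↦ ?_) ?_
  · rw [Lower_apply_of_ne_right y hmj.ne', Lower_apply_of_ne_left y (by norm_num)]
    exact hmax j hmj hjn
  · rcases h1m.eq_or_lt with rfl | h2m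
    · exact one_le_Kval
    refine le_Kval h2m hmn ?_
    rw [Lower_apply_self, Lower_apply_of_ne_left y (by norm_num), one_add_one_eq_two]
    have := hy.apply_one_le_apply_two h2m hmn
    omega

theorem Kval_lower_eq_Idef_general (n : ℕ) (y : ℕ → ℕ → ℕ) (hy : IsTri n y)
    (k : ℕ) (hk : 1 ≤ k)
    (hI : (Iset n y k).Nonempty) (hJ : ¬(Jset n y k).Nonempty) :
    Kval (Lower y 1 (Idef n y k)) 1 n = Idef n y k ∧
      aStep (Lower y 1 (Idef n y k), 1, n) = (y, 0, Idef n y k) := by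
  obtain ⟨hkI, hIn, hIpos⟩ : Idef n y k ∈ Iset n y k := Nat.sInf_mem hI
  have hK : Kval (Lower y 1 (Idef n y k)) 1 n = Idef n y k :=
    Kval_Lower_one hy (hk.trans hkI) hIn hIpos fun j hIj hjn hj ↦ hJ ⟨j, hIj, hjn, hj⟩
  refine ⟨hK, ?_⟩
  simp only [aStep, hK, Raise_Lower_of_pos hIpos, Nat.sub_self]

/-- If `I(Y,k) < ∞` and `J(Y,k) = ∞`, and `Y' = Lower(Y,1,I(Y,k))`,
then `K_1(Y',n) = I(Y,k)`, and consequently `a(Y',1,n) = (Y, 0, I(Y,k))`. -/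
theorem Kval_lower_eq_Idef (n : ℕ) (hn : 1 ≤ n) (y : ℕ → ℕ → ℕ) (hy : IsTri n y)
    (k : ℕ) (hk : 1 ≤ k) (hkn : k ≤ n)
    (hI : (Iset n y k).Nonempty) (hJ : ¬(Jset n y k).Nonempty) :
    Kval (Lower y 1 (Idef n y k)) 1 n = Idef n y k ∧
      aStep (Lower y 1 (Idef n y k), 1, n) = (y, 0, Idef n y k) :=
  Kval_lower_eq_Idef_general n y hy k hk hI hJ
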